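/- Fix n ∈ ℕ and functions k, r : (Fin n → Bool) → ℕ. Assume that k(S') ≤ k(S) + 1 whenever the state S' is obtained from a state S by changing exactly one coordinate from true to false. Then d_min(⟨n,k,r⟩) ≥ −n − 2·k(S_B). If moreover k(S) ≤ k(S_B) for every state S having exactly one coordinate equal to false (B-adequacy of the diagram), then d_min(⟨n,k,r⟩) = −n − 2·k(S_B). -/

import Mathlib

open Finset

noncomputable section

/-- The ring `(ℤ[z])[A, A⁻¹]`: Laurent polynomials in `A` over `ℤ[z]`. -/
abbrev LP := LaurentPolynomial (Polynomial ℤ)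

/-- The homological variable `z`. -/
def zz : LP := LaurentPolynomial.C Polynomial.X

/-- `a(S)`: the number of `A`-smoothings (coordinates where `S` is `false`). -/
def aCount {n : ℕ} (S : Fin n → Bool) : ℕ := (Finset.univ.filter fun i => S i = false).card

/-- `b(S)`: the number of `B`-smoothings (coordinates where `S` is `true`). -/
def bCount {n : ℕ} (S : Fin n → Bool) : ℕ := (Finset.univ.filter fun i => S i = true).card

/-- Two states are adjacent if they differ in exactly one coordinate. -/
def Adjacent {n : ℕ} (S S' : Fin n → Bool) : Prop :=
  ∃ i : Fin n, S' = Function.update S i (!(S i))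

/-- The bracket state sum
`⟨n,k,r⟩ = Σ_S A^(a(S)-b(S)) · (-A⁻² - A²)^(k S) · z^(r S)` in `(ℤ[z])[A,A⁻¹]`,
where `A^m = LaurentPolynomial.T m`. -/
def bracket (n : ℕ) (k r : (Fin n → Bool) → ℕ) : LP :=
  ∑ S : Fin n → Bool,
    LaurentPolynomial.T ((aCount S : ℤ) - (bCount S : ℤ)) *
      (-(LaurentPolynomial.T (-2)) - LaurentPolynomial.T 2) ^ (k S) * zz ^ (r S)

/-!
Switching the `A`-smoothings of a state `S` to `B` one at a time, the hypothesis on `k` gives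
`k(S) ≤ k(S_B) + a(S)`, and `B`-adequacy sharpens this to `k(S) < k(S_B) + a(S)` for `S ≠ S_B`.
The lowest power of `A` in the term of `S` is `a(S) - b(S) - 2k(S) = -n + 2(a(S) - k(S))`, which
is therefore at least `-n - 2k(S_B)`; under adequacy it is attained by `S_B` alone, whose lowest
coefficient `(-1)^k(S_B) z^r(S_B)` is nonzero.
-/

open LaurentPolynomial Polynomial

namespace LaurentPolynomial

variable {R : Type*}

lemma coeff_T_mul [Semiring R] (t d : ℤ) (f : R[T;T⁻¹]) :
    (T t * f).coeff d = f.coeff (d - t) := by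
  rw [T, AddMonoidAlgebra.coeff_single_mul_apply, one_mul, neg_add_eq_sub]

lemma coeff_toLaurent_natCast [Semiring R] (p : R[X]) (m : ℕ) :
    (toLaurent p).coeff m = p.coeff m := by
  rw [coeff_toLaurent]
  exact Finsupp.mapDomain_apply Nat.castEmbedding.injective _ m

lemma le_of_mem_support_T_mul_toLaurent [Semiring R] {c d : ℤ} {p : R[X]}
    (h : d ∈ (T c * toLaurent p).coeff.support) : c ≤ d := by
  rw [Finsupp.mem_support_iff, coeff_T_mul, ← Finsupp.mem_support_iff,
    support_coeff_toLaurent] at h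
  obtain ⟨m, -, hm⟩ := Finset.mem_map.mp h
  have : (m : ℤ) = d - c := hm
  omega

lemma coeff_T_mul_toLaurent_self [Semiring R] (c : ℤ) (p : R[X]) :
    (T c * toLaurent p).coeff c = p.coeff 0 := by
  rw [coeff_T_mul, sub_self, ← Nat.cast_zero, coeff_toLaurent_natCast]

lemma neg_T_neg_two_sub_T_two [CommRing R] :
    (-T (-2) - T 2 : R[T;T⁻¹]) = T (-2) * toLaurent (-1 - X ^ 4) := by
  rw [map_sub, map_neg, map_one, toLaurent_X_pow, mul_sub, ← T_add]
  norm_num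

end LaurentPolynomial

section States

variable {n : ℕ}

lemma aCount_add_bCount (S : Fin n → Bool) : aCount S + bCount S = n := by
  rw [aCount, bCount]
  simpa using Finset.card_filter_add_card_filter_not (s := univ) (p := fun i => S i = false)

lemma aCount_eq_zero_iff {S : Fin n → Bool} : aCount S = 0 ↔ S = fun _ => true := by
  simp [aCount, Finset.filter_eq_empty_iff, funext_iff]

lemma aCount_update_true_add_one {S : Fin n → Bool} {i : Fin n} (h : S i = false) :
    aCount (Function.update S i true) + 1 = aCount S := by
  have hfilter : (univ.filter fun j => Function.update S i true j = false)
      = (univ.filter fun j => S j = false).erase i := by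
    ext j
    by_cases hj : j = i
    · simp [hj]
    · simp [hj, Function.update_of_ne]
  rw [aCount, aCount, hfilter, Finset.card_erase_add_one (by simp [h])]

end States

section Chain

variable {n : ℕ}

def AStepBounded (k : (Fin n → Bool) → ℕ) : Prop :=
  ∀ (S : Fin n → Bool) (i : Fin n), S i = true → k (Function.update S i false) ≤ k S + 1

variable {k : (Fin n → Bool) → ℕ}

lemma AStepBounded.le_update_true_add_one (hk : AStepBounded k) {S : Fin n → Bool} {i : Fin n}
    (h : S i = false) : k S ≤ k (Function.update S i true) + 1 := by
  simpa [Function.update_idem, ← h] using hk (Function.update S i true) i (by simp)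

lemma AStepBounded.le_add_of_aCount_eq_add (hk : AStepBounded k) {j C : ℕ}
    (hbase : ∀ S, aCount S = j → k S ≤ C) (m : ℕ) :
    ∀ S, aCount S = j + m → k S ≤ C + m := by
  induction m with
  | zero => simpa using hbase
  | succ m ih =>
    intro S hS
    obtain ⟨i, hi⟩ : ∃ i, S i = false := by
      by_contra! hS_B
      have : aCount S = 0 := aCount_eq_zero_iff.mpr (funext fun i => by simpa using hS_B i)
      omega
    have hstep := hk.le_update_true_add_one hi
    have hrest := ih (Function.update S i true) (by have := aCount_update_true_add_one hi; omega)
    omega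

lemma AStepBounded.le_add_aCount (hk : AStepBounded k) (S : Fin n → Bool) :
    k S ≤ k (fun _ => true) + aCount S := by
  refine hk.le_add_of_aCount_eq_add (j := 0) (fun S hS => ?_) _ S (zero_add _).symm
  rw [aCount_eq_zero_iff.mp hS]

lemma AStepBounded.add_one_le_add_aCount (hk : AStepBounded k)
    (hadq : ∀ S : Fin n → Bool, aCount S = 1 → k S ≤ k (fun _ => true))
    {S : Fin n → Bool} (hS : S ≠ fun _ => true) :
    k S + 1 ≤ k (fun _ => true) + aCount S := by
  have hpos : aCount S ≠ 0 := mt aCount_eq_zero_iff.mp hS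
  have := hk.le_add_of_aCount_eq_add hadq (aCount S - 1) S (by omega)
  omega

end Chain

section Bracket

variable {n : ℕ}

/-- `⟨n,k,r⟩ = A^(-n - 2 k(S_B)) · bracketPoly(A)`; the subtraction in the exponent never
truncates, since `k S ≤ k S_B + a(S)`. -/
def bracketPoly (n : ℕ) (k r : (Fin n → Bool) → ℕ) : ℤ[X][X] :=
  ∑ S : Fin n → Bool, X ^ (2 * (aCount S + k (fun _ => true) - k S)) *
    (-1 - X ^ 4) ^ k S * Polynomial.C (X ^ r S)

lemma bracket_eq_T_mul_toLaurent {k : (Fin n → Bool) → ℕ} (hk : AStepBounded k)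
    (r : (Fin n → Bool) → ℕ) :
    bracket n k r = T (-n - 2 * k (fun _ => true)) * toLaurent (bracketPoly n k r) := by
  rw [bracket, bracketPoly, map_sum, Finset.mul_sum]
  refine Finset.sum_congr rfl fun S _ => ?_
  have hexp : (aCount S - bCount S : ℤ) + k S * (-2)
      = -n - 2 * k (fun _ => true) + ((2 * (aCount S + k (fun _ => true) - k S) : ℕ) : ℤ) := by
    have := aCount_add_bCount S
    have := hk.le_add_aCount S
    omega
  rw [neg_T_neg_two_sub_T_two, mul_pow, T_pow, ← mul_assoc, ← T_add, hexp, T_add, zz,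
    ← toLaurent_C, map_mul, map_mul, toLaurent_X_pow]
  simp only [map_pow]
  ring

lemma bracketPoly_coeff_zero {k : (Fin n → Bool) → ℕ} (hk : AStepBounded k)
    (hadq : ∀ S : Fin n → Bool, aCount S = 1 → k S ≤ k (fun _ => true))
    (r : (Fin n → Bool) → ℕ) :
    (bracketPoly n k r).coeff 0 = (-1) ^ k (fun _ => true) * X ^ r (fun _ => true) := by
  rw [coeff_zero_eq_eval_zero, bracketPoly, eval_finsetSum,
    Finset.sum_eq_single_of_mem (fun _ => true) (Finset.mem_univ _)]
  · simp [aCount_eq_zero_iff.mpr rfl]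
  · intro S _ hS
    have := hk.add_one_le_add_aCount hadq hS
    simp [zero_pow (show 2 * (aCount S + k (fun _ => true) - k S) ≠ 0 by omega)]

end Bracket

/-- Lemma 3.6(ii): if `k` increases by at most one when a single smoothing
is switched from `B` to `A`, then every exponent of `A` occurring in `⟨n,k,r⟩` is at least
`-n - 2·k(S_B)`; and if the diagram is `B`-adequate, the exponent `-n - 2·k(S_B)` occurs. -/
theorem dmin_bracket (n : ℕ) (k r : (Fin n → Bool) → ℕ)
    (hk : ∀ (S : Fin n → Bool) (i : Fin n), S i = true →
      k (Function.update S i false) ≤ k S + 1) :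
    (∀ d ∈ (bracket n k r).coeff.support, -(n : ℤ) - 2 * k (fun _ => true) ≤ d) ∧
    ((∀ S : Fin n → Bool, aCount S = 1 → k S ≤ k (fun _ => true)) →
      (-(n : ℤ) - 2 * (k (fun _ => true) : ℤ)) ∈ (bracket n k r).coeff.support) := by
  rw [bracket_eq_T_mul_toLaurent hk r]
  refine ⟨fun d hd => le_of_mem_support_T_mul_toLaurent hd, fun hadq => ?_⟩
  rw [Finsupp.mem_support_iff, coeff_T_mul_toLaurent_self, bracketPoly_coeff_zero hk hadq]
  exact mul_ne_zero (pow_ne_zero _ (neg_ne_zero.mpr one_ne_zero)) (pow_ne_zero _ X_ne_zero)
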